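/- arXiv:2012.01845 — 2 statements merged into one kernel-verified Lean document; each statement's English description precedes it below -/
import Mathlib

section
/- Let G be a fuzzy labeled graph. The largest crisp directed auto-simulation of G (the largest crisp directed simulation between G and itself) is a pre-order, i.e., it is reflexive and transitive. -/
/-- A fuzzy labeled graph over a set `SV` of vertex labels, a set `SE` of edge
labels and a set `V` of vertices: `E` is the fuzzy set of labeled edges and `L`
is the labeling function of vertices, both taking values in the interval `[0,1]`. -/
structure FuzzyGraph (SV SE V : Type*) where
  E : V → SE → V → ℝ
  L : V → SV → ℝ
  E_mem : ∀ x r y, E x r y ∈ Set.Icc (0 : ℝ) 1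
  L_mem : ∀ x p, L x p ∈ Set.Icc (0 : ℝ) 1

/-- `Z ⊆ V × V'` is a (crisp) simulation between `G` and `G'`. -/
def IsSimulation {SV SE V V' : Type*} (G : FuzzyGraph SV SE V) (G' : FuzzyGraph SV SE V')
    (Z : Set (V × V')) : Prop :=
  (∀ x x', (x, x') ∈ Z → ∀ p, G.L x p ≤ G'.L x' p) ∧
  (∀ x x' r y, (x, x') ∈ Z → 0 < G.E x r y →
    ∃ y', (y, y') ∈ Z ∧ G.E x r y ≤ G'.E x' r y')

/-- `Z ⊆ V × V'` is a (crisp) directed simulation between `G` and `G'`. -/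
def IsDirectedSimulation {SV SE V V' : Type*} (G : FuzzyGraph SV SE V) (G' : FuzzyGraph SV SE V')
    (Z : Set (V × V')) : Prop :=
  (∀ x x', (x, x') ∈ Z → ∀ p, G.L x p ≤ G'.L x' p) ∧
  (∀ x x' r y, (x, x') ∈ Z → 0 < G.E x r y →
    ∃ y', (y, y') ∈ Z ∧ G.E x r y ≤ G'.E x' r y') ∧
  (∀ x x' r y', (x, x') ∈ Z → 0 < G'.E x' r y' →
    ∃ y, (y, y') ∈ Z ∧ G'.E x' r y' ≤ G.E x r y)

/-- The largest crisp directed auto-simulation of a fuzzy labeled graph `G` is a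
pre-order, i.e., it is reflexive and transitive. -/
theorem largest_directedAutoSimulation_preorder {SV SE V : Type*} [Finite SV] [Finite SE]
    (G : FuzzyGraph SV SE V) (Z : Set (V × V))
    (hZ : IsDirectedSimulation G G Z)
    (hmax : ∀ Z' : Set (V × V), IsDirectedSimulation G G Z' → Z' ⊆ Z) :
    (∀ x : V, (x, x) ∈ Z) ∧
    (∀ x y z : V, (x, y) ∈ Z → (y, z) ∈ Z → (x, z) ∈ Z) := by
  obtain ⟨hL, hF, hB⟩ := hZ
  have hid : IsDirectedSimulation G G {p : V × V | p.1 = p.2} := by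
    refine ⟨?_, ?_, ?_⟩
    · rintro x x' (h : x = x') p; subst h; exact le_refl _
    · rintro x x' r y (h : x = x') _; exact ⟨y, rfl, by subst h; exact le_refl _⟩
    · rintro x x' r y' (h : x = x') _; exact ⟨y', rfl, by subst h; exact le_refl _⟩
  have hcomp : IsDirectedSimulation G G {p : V × V | ∃ m, (p.1, m) ∈ Z ∧ (m, p.2) ∈ Z} := by
    refine ⟨?_, ?_, ?_⟩
    · rintro x x' ⟨m, h1, h2⟩ p; exact le_trans (hL _ _ h1 p) (hL _ _ h2 p)
    · rintro x x' r y ⟨m, h1, h2⟩ he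
      obtain ⟨y1, hy1, he1⟩ := hF _ _ r _ h1 he
      obtain ⟨y2, hy2, he2⟩ := hF _ _ r _ h2 (lt_of_lt_of_le he he1)
      exact ⟨y2, ⟨y1, hy1, hy2⟩, le_trans he1 he2⟩
    · rintro x x' r y' ⟨m, h1, h2⟩ he
      obtain ⟨y1, hy1, he1⟩ := hB _ _ r _ h2 he
      obtain ⟨y2, hy2, he2⟩ := hB _ _ r _ h1 (lt_of_lt_of_le he he1)
      exact ⟨y2, ⟨y1, hy2, hy1⟩, le_trans he1 he2⟩
  constructor
  · intro x; exact hmax _ hid (rfl : ((x, x) : V × V).1 = _)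
  · intro x y z h1 h2; exact hmax _ hcomp ⟨y, h1, h2⟩
end

section
/- Let A = ⟨Q, δ, σ, τ⟩ and A' = ⟨Q', δ', σ', τ'⟩ be fuzzy automata over the same alphabet Σ, let G = ⟨V, E, L⟩ and G' = ⟨V', E', L'⟩ be the fuzzy labeled graphs corresponding to A and A' respectively, with added vertices v_i, v_f ∈ V and v'_i, v'_f ∈ V'. If Z ⊆ Q × Q', then Z is a crisp simulation between A and A' if and only if Z ∪ {⟨v_i, v'_i⟩, ⟨v_f, v'_f⟩} is a crisp simulation between G and G'. -/
/-- A fuzzy automaton over an alphabet `S` with set of states `Q`: `δ` is the fuzzy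
transition function, `σ` is the fuzzy set of initial states and `τ` is the fuzzy set of
terminal states, all taking values in the interval `[0,1]`. -/
structure FuzzyAutomaton (S Q : Type*) where
  δ : Q → S → Q → ℝ
  σ : Q → ℝ
  τ : Q → ℝ
  δ_mem : ∀ x r y, δ x r y ∈ Set.Icc (0 : ℝ) 1
  σ_mem : ∀ x, σ x ∈ Set.Icc (0 : ℝ) 1
  τ_mem : ∀ x, τ x ∈ Set.Icc (0 : ℝ) 1

/-- `Z ⊆ Q × Q'` is a (crisp) simulation between the fuzzy automata `A` and `A'`. -/
def IsFASimulation {S Q Q' : Type*} (A : FuzzyAutomaton S Q) (A' : FuzzyAutomaton S Q')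
    (Z : Set (Q × Q')) : Prop :=
  (∀ x, 0 < A.σ x → ∃ x', (x, x') ∈ Z ∧ A.σ x ≤ A'.σ x') ∧
  (∀ x x' r y, (x, x') ∈ Z → 0 < A.δ x r y →
    ∃ y', (y, y') ∈ Z ∧ A.δ x r y ≤ A'.δ x' r y') ∧
  (∀ x x', (x, x') ∈ Z → 0 < A.τ x → A.τ x ≤ A'.τ x')

/-- `Z ⊆ Q × Q'` is a (crisp) directed simulation between the fuzzy automata
`A` and `A'`. -/
def IsFADirectedSimulation {S Q Q' : Type*} (A : FuzzyAutomaton S Q)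
    (A' : FuzzyAutomaton S Q') (Z : Set (Q × Q')) : Prop :=
  IsFASimulation A A' Z ∧
  (∀ x x' r y', (x, x') ∈ Z → 0 < A'.δ x' r y' →
    ∃ y, (y, y') ∈ Z ∧ A'.δ x' r y' ≤ A.δ x r y)

/-- The fuzzy labeled graph corresponding to a fuzzy automaton `A`. The vertices are
the states of `A` together with two new vertices `Sum.inr false` (the vertex `v_i`,
standing for the new unique initial state) and `Sum.inr true` (the vertex `v_f`,
standing for the new unique final state). The set of edge labels is the alphabet `S`
and the set of vertex labels is `Bool`, where the label `false` identifies `v_i` and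
the label `true` identifies `v_f`. -/
def FuzzyAutomaton.toFuzzyGraph {S Q : Type*} (A : FuzzyAutomaton S Q) :
    FuzzyGraph Bool S (Q ⊕ Bool) where
  E := fun v r w =>
    match v, w with
    | Sum.inl x, Sum.inl y => A.δ x r y
    | Sum.inr false, Sum.inl y => A.σ y
    | Sum.inl x, Sum.inr true => A.τ x
    | _, _ => 0
  L := fun v p =>
    match v with
    | Sum.inl _ => 0
    | Sum.inr b => if p = b then 1 else 0
  E_mem := by
    rintro (x | (_ | _)) r (y | (_ | _)) <;>
      first
        | exact A.δ_mem _ _ _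
        | exact A.σ_mem _
        | exact A.τ_mem _
        | exact ⟨le_refl 0, zero_le_one⟩
  L_mem := by
    rintro (x | b) p
    · exact ⟨le_refl 0, zero_le_one⟩
    · dsimp only
      split <;> norm_num

/-- Let `A` and `A'` be fuzzy automata over the same alphabet `S` and let `G` and `G'`
be the fuzzy labeled graphs corresponding to `A` and `A'`, with added vertices
`v_i = Sum.inr false`, `v_f = Sum.inr true` of `G` and `v'_i = Sum.inr false`,
`v'_f = Sum.inr true` of `G'`. A relation `Z ⊆ Q × Q'` is a crisp simulation between
`A` and `A'` iff `Z ∪ {⟨v_i, v'_i⟩, ⟨v_f, v'_f⟩}` is a crisp simulation between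
`G` and `G'`. -/
theorem isFASimulation_iff_isSimulation_toFuzzyGraph {S Q Q' : Type*}
    [Finite S] [Nonempty S] [Nonempty Q] [Nonempty Q']
    (A : FuzzyAutomaton S Q) (A' : FuzzyAutomaton S Q') (Z : Set (Q × Q')) :
    IsFASimulation A A' Z ↔
      IsSimulation A.toFuzzyGraph A'.toFuzzyGraph
        ((fun p : Q × Q' => ((Sum.inl p.1 : Q ⊕ Bool), (Sum.inl p.2 : Q' ⊕ Bool))) '' Z ∪
          {((Sum.inr false : Q ⊕ Bool), (Sum.inr false : Q' ⊕ Bool)),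
           ((Sum.inr true : Q ⊕ Bool), (Sum.inr true : Q' ⊕ Bool))}) := by
  obtain ⟨r0⟩ := ‹Nonempty S›
  constructor
  · rintro ⟨h1, h2, h3⟩
    constructor
    · rintro x x' (⟨⟨a, b⟩, hab, heq⟩ | h | h) p
      · obtain ⟨rfl, rfl⟩ := Prod.mk.injEq .. ▸ heq
        simp [FuzzyAutomaton.toFuzzyGraph]
      · obtain ⟨rfl, rfl⟩ := Prod.mk.injEq .. ▸ h
        simp [FuzzyAutomaton.toFuzzyGraph]
      · obtain ⟨rfl, rfl⟩ := Prod.mk.injEq .. ▸ Set.mem_singleton_iff.mp h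
        simp [FuzzyAutomaton.toFuzzyGraph]
    · rintro x x' r y (⟨⟨a, b⟩, hab, heq⟩ | h | h) hpos
      · obtain ⟨rfl, rfl⟩ := Prod.mk.injEq .. ▸ heq
        rcases y with y | (_ | _)
        · obtain ⟨y', hy', hle⟩ := h2 a b r y hab hpos
          exact ⟨Sum.inl y', Or.inl ⟨(y, y'), hy', rfl⟩, hle⟩
        · simp [FuzzyAutomaton.toFuzzyGraph] at hpos
        · exact ⟨Sum.inr true, Or.inr (Or.inr rfl),
            h3 a b hab hpos⟩
      · obtain ⟨rfl, rfl⟩ := Prod.mk.injEq .. ▸ h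
        rcases y with y | (_ | _) <;>
          simp only [FuzzyAutomaton.toFuzzyGraph] at hpos ⊢
        · obtain ⟨x', hx', hle⟩ := h1 y hpos
          exact ⟨Sum.inl x', Or.inl ⟨(y, x'), hx', rfl⟩, hle⟩
        · exact absurd hpos (by norm_num)
        · exact absurd hpos (by norm_num)
      · obtain ⟨rfl, rfl⟩ := Prod.mk.injEq .. ▸ Set.mem_singleton_iff.mp h
        rcases y with y | (_ | _) <;>
          simp [FuzzyAutomaton.toFuzzyGraph] at hpos
  · rintro ⟨g1, g2⟩
    refine ⟨?_, ?_, ?_⟩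
    · intro x hpos
      obtain ⟨y', hy', hle⟩ := g2 (Sum.inr false) (Sum.inr false) r0 (Sum.inl x)
        (Or.inr (Or.inl rfl)) hpos
      rcases hy' with ⟨⟨a, b⟩, hab, heq⟩ | h | h
      · obtain ⟨h1, rfl⟩ := Prod.mk.injEq .. ▸ heq
        obtain rfl : a = x := Sum.inl.inj h1
        exact ⟨b, hab, hle⟩
      · exact absurd (Prod.mk.injEq .. ▸ h).1 (by simp)
      · exact absurd (Prod.mk.injEq .. ▸ Set.mem_singleton_iff.mp h).1 (by simp)
    · intro x x' r y hxx' hpos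
      obtain ⟨y', hy', hle⟩ := g2 (Sum.inl x) (Sum.inl x') r (Sum.inl y)
        (Or.inl ⟨(x, x'), hxx', rfl⟩) hpos
      rcases hy' with ⟨⟨a, b⟩, hab, heq⟩ | h | h
      · obtain ⟨h1, rfl⟩ := Prod.mk.injEq .. ▸ heq
        obtain rfl : a = y := Sum.inl.inj h1
        exact ⟨b, hab, hle⟩
      · exact absurd (Prod.mk.injEq .. ▸ h).1 (by simp)
      · exact absurd (Prod.mk.injEq .. ▸ Set.mem_singleton_iff.mp h).1 (by simp)
    · intro x x' hxx' hpos
      obtain ⟨y', hy', hle⟩ := g2 (Sum.inl x) (Sum.inl x') r0 (Sum.inr true)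
        (Or.inl ⟨(x, x'), hxx', rfl⟩) hpos
      rcases hy' with ⟨⟨a, b⟩, hab, heq⟩ | h | h
      · exact absurd (Prod.mk.injEq .. ▸ heq).1 (by simp)
      · exact absurd (Prod.mk.injEq .. ▸ h).1 (by simp)
      · obtain ⟨-, rfl⟩ := Prod.mk.injEq .. ▸ Set.mem_singleton_iff.mp h
        exact hle
end
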